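/- For every nonempty perfect set P ⊆ ℝ there exists a strictly increasing sequence of natural numbers (n_k) such that, setting D = {x ∈ ℝ : ‖n_k·x‖ ≤ 2^{-k} for all but finitely many k}, the set P ∩ (y − D) is dense in P for every y ∈ ℝ. -/

import Mathlib

open MeasureTheory Filter Set

/-- Distance from a real number to the nearest integer. -/
noncomputable def nintDist (x : ℝ) : ℝ := |x - round x|

/-- `E` is a Dirichlet set. -/
def IsDirichlet (E : Set ℝ) : Prop :=
  ∃ n : ℕ → ℕ, StrictMono n ∧ ∀ x ∈ E, ∀ k : ℕ, nintDist (n k * x) ≤ (1/2) ^ k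

/-- `E` is a pseudo-Dirichlet set. -/
def IsPseudoDirichlet (E : Set ℝ) : Prop :=
  ∃ n : ℕ → ℕ, StrictMono n ∧ ∀ x ∈ E, ∀ᶠ k in atTop, nintDist (n k * x) ≤ (1/2) ^ k

/-- `E` is an Arbault set. -/
def IsArbault (E : Set ℝ) : Prop :=
  ∃ n : ℕ → ℕ, StrictMono n ∧ ∀ x ∈ E,
    Tendsto (fun k => nintDist (n k * x)) atTop (nhds 0)

/-- `E` is an N-set. -/
def IsNSet (E : Set ℝ) : Prop :=
  ∃ a : ℕ → ℝ, (∀ n, 0 ≤ a n) ∧ ¬ Summable a ∧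
    ∀ x ∈ E, Summable (fun n => a n * nintDist (n * x))

/-- `s` is an Fσ set: a countable union of closed sets. -/
def IsFsigma (s : Set ℝ) : Prop :=
  ∃ f : ℕ → Set ℝ, (∀ n, IsClosed (f n)) ∧ s = ⋃ n, f n

/-!
Stage `k` of the construction is a finite family of small closed balls meeting `P`. Inside each
ball of stage `k`, choose points of `P` that are linearly independent over `ℚ` together with `1`
(relatively open parts of a perfect set are uncountable), one for each point `i / M` of a fine net
of the circle. Kronecker's theorem yields `n (k + 1)` sending every chosen point close to its net
point modulo `1`, so for each phase `β` one of the small balls around them lies where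
`‖β - n (k + 1) * q‖ ≤ 2 ^ (-(k + 1))`. Given `y`, follow at each stage a ball chosen for
`β = n (k + 1) * y`: by compactness the nested balls meet `P` in a point `w` with `y - w ∈ D`.
One ball with rational centre and radius added at each stage makes these points dense in `P`.

Kronecker's theorem is proved with the kernel `cos (π θ) ^ (2 K)`: along `n ↦ n * x - t`, the
averages of the product kernel tend to its constant Fourier coefficient, since all other
frequencies are irrational, and for large `K` this coefficient exceeds the kernel's values away
from the target.
-/

open Metric Real FourierTransform

lemma nintDist_eq_norm (x : ℝ) : nintDist x = ‖(x : UnitAddCircle)‖ :=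
  UnitAddCircle.norm_eq.symm

lemma nintDist_le_abs_sub_intCast (x : ℝ) (m : ℤ) : nintDist x ≤ |x - m| := round_le x m

lemma nintDist_le_abs (x : ℝ) : nintDist x ≤ |x| := by
  simpa using nintDist_le_abs_sub_intCast x 0

lemma nintDist_le_half (x : ℝ) : nintDist x ≤ 1 / 2 := abs_sub_round x

lemma nintDist_sub_comm (x y : ℝ) : nintDist (x - y) = nintDist (y - x) := by
  simp only [nintDist_eq_norm, AddCircle.coe_sub, norm_sub_rev]

lemma nintDist_sub_le (x y z : ℝ) : nintDist (x - z) ≤ nintDist (x - y) + nintDist (y - z) := by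
  simp only [nintDist_eq_norm, AddCircle.coe_sub]
  exact norm_sub_le_norm_sub_add_norm_sub _ _ _

lemma cos_two_pi_mul_nintDist (x : ℝ) : cos (2 * π * nintDist x) = cos (2 * π * x) := by
  have h : 2 * π * nintDist x = |2 * π * x - round x * (2 * π)| := by
    rw [nintDist, show 2 * π * x - round x * (2 * π) = 2 * π * (x - round x) by ring, abs_mul,
      abs_of_pos two_pi_pos]
  rw [h, cos_abs, cos_sub_int_mul_two_pi]

lemma exists_nintDist_sub_div_le (β : ℝ) {M : ℕ} (hM : 0 < M) :
    ∃ i : Fin M, nintDist (β - i / M) ≤ 1 / M := by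
  have hM' : (0 : ℝ) < M := by exact_mod_cast hM
  have hfract : 0 ≤ Int.fract β * M := by positivity
  have hiM : ⌊Int.fract β * M⌋₊ < M :=
    (Nat.floor_lt hfract).2 (mul_lt_of_lt_one_left hM' (Int.fract_lt_one β))
  refine ⟨⟨_, hiM⟩, (nintDist_le_abs_sub_intCast _ ⌊β⌋).trans ?_⟩
  have h₁ := Nat.floor_le hfract
  have h₂ := Nat.lt_floor_add_one (Int.fract β * M)
  rw [show β - (⌊Int.fract β * M⌋₊ : ℝ) / M - ⌊β⌋ = (Int.fract β * M - ⌊Int.fract β * M⌋₊) / M by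
      rw [Int.fract]; field_simp; ring,
    abs_div, abs_of_nonneg (by linarith), abs_of_pos hM']
  gcongr
  linarith

lemma fourierChar_natCast_mul (n : ℕ) (θ : ℝ) : (𝐞 (n * θ) : ℂ) = 𝐞 θ ^ n := by
  rw [← nsmul_eq_mul, AddChar.map_nsmul_eq_pow, Circle.coe_pow]

lemma fourierChar_sum {ι : Type*} (s : Finset ι) (f : ι → ℝ) :
    (𝐞 (∑ i ∈ s, f i) : ℂ) = ∏ i ∈ s, (𝐞 (f i) : ℂ) := by
  classical
  induction s using Finset.induction_on with
  | empty => simp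
  | insert a s ha ih =>
    rw [Finset.sum_insert ha, Finset.prod_insert ha, AddChar.map_add_eq_mul, Circle.coe_mul, ih]

lemma fourierChar_eq_one_iff {θ : ℝ} : (𝐞 θ : ℂ) = 1 ↔ ∃ m : ℤ, θ = m := by
  rw [Circle.coe_eq_one, fourierChar_apply', Circle.exp_eq_one]
  refine exists_congr fun m => ⟨fun h => ?_, fun h => by rw [h]; ring⟩
  nlinarith [pi_pos]

lemma fourierChar_add_fourierChar_neg (θ : ℝ) : (𝐞 θ : ℂ) + 𝐞 (-θ) = 2 * cos (2 * π * θ) := by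
  rw [fourierChar_apply, fourierChar_apply, Complex.exp_mul_I, Complex.exp_mul_I]
  push_cast
  rw [mul_neg, Complex.cos_neg, Complex.sin_neg]
  ring

lemma norm_geom_sum_le {𝕜 : Type*} [NormedDivisionRing 𝕜] {z : 𝕜} (hz : ‖z‖ ≤ 1) (hz₁ : z ≠ 1)
    (N : ℕ) : ‖∑ n ∈ Finset.range N, z ^ n‖ ≤ 2 / ‖z - 1‖ := by
  rw [geom_sum_eq hz₁, norm_div]
  have hN : ‖z ^ N - 1‖ ≤ 2 := by
    calc ‖z ^ N - 1‖ ≤ ‖z ^ N‖ + ‖(1 : 𝕜)‖ := norm_sub_le _ _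
      _ ≤ 1 + 1 := by rw [norm_pow, norm_one]; gcongr; exact pow_le_one₀ (norm_nonneg z) hz
      _ = 2 := by norm_num
  gcongr

lemma exists_forall_norm_sum_range_sum_pow_sub_le {𝕜 α : Type*} [NormedField 𝕜] [DecidableEq 𝕜]
    (s : Finset α) (C z : α → 𝕜) (hz : ∀ a ∈ s, ‖z a‖ ≤ 1) : ∃ B : ℝ, ∀ N : ℕ,
      ‖∑ n ∈ Finset.range N, ∑ a ∈ s, C a * z a ^ n - N * ∑ a ∈ s with z a = 1, C a‖ ≤ B := by
  refine ⟨∑ a ∈ s with z a ≠ 1, ‖C a‖ * (2 / ‖z a - 1‖), fun N => ?_⟩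
  have hsplit : ∑ n ∈ Finset.range N, ∑ a ∈ s, C a * z a ^ n - N * ∑ a ∈ s with z a = 1, C a
      = ∑ a ∈ s with z a ≠ 1, C a * ∑ n ∈ Finset.range N, z a ^ n := by
    simp_rw [Finset.sum_comm (s := Finset.range N), ← Finset.mul_sum]
    rw [← Finset.sum_filter_add_sum_filter_not s (fun a => z a = 1)]
    have hone : ∑ a ∈ s with z a = 1, C a * ∑ n ∈ Finset.range N, z a ^ n
        = N * ∑ a ∈ s with z a = 1, C a := by
      rw [Finset.mul_sum]
      refine Finset.sum_congr rfl fun a ha => ?_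
      simp [(Finset.mem_filter.1 ha).2, mul_comm]
    rw [hone, add_sub_cancel_left]
  rw [hsplit]
  refine (norm_sum_le _ _).trans (Finset.sum_le_sum fun a ha => ?_)
  obtain ⟨has, ha1⟩ := Finset.mem_filter.1 ha
  rw [norm_mul]
  exact mul_le_mul_of_nonneg_left (norm_geom_sum_le (hz a has) ha1 N) (norm_nonneg _)

/-- `cosKernel K θ = cos (π θ) ^ (2 K)`, a trigonometric polynomial of degree `K`. -/
noncomputable def cosKernel (K : ℕ) (θ : ℝ) : ℝ := ((1 + cos (2 * π * θ)) / 2) ^ K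

lemma cosKernel_nonneg (K : ℕ) (θ : ℝ) : 0 ≤ cosKernel K θ :=
  pow_nonneg (by linarith [neg_one_le_cos (2 * π * θ)]) K

lemma cosKernel_le_one (K : ℕ) (θ : ℝ) : cosKernel K θ ≤ 1 :=
  pow_le_one₀ (by linarith [neg_one_le_cos (2 * π * θ)]) (by linarith [cos_le_one (2 * π * θ)])

lemma cosKernel_le_of_le_nintDist (K : ℕ) {ε θ : ℝ} (hε : 0 ≤ ε) (h : ε ≤ nintDist θ) :
    cosKernel K θ ≤ cosKernel K ε := by
  refine pow_le_pow_left₀ (by linarith [neg_one_le_cos (2 * π * θ)]) ?_ K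
  rw [← cos_two_pi_mul_nintDist θ]
  have := cos_le_cos_of_nonneg_of_le_pi (by positivity : 0 ≤ 2 * π * ε)
    (by nlinarith [nintDist_le_half θ, pi_pos]) (mul_le_mul_of_nonneg_left h two_pi_pos.le)
  linarith

lemma cosKernel_one_lt_one {ε : ℝ} (h₀ : 0 < ε) (h₁ : ε ≤ 1 / 2) : cosKernel 1 ε < 1 := by
  have : cos (2 * π * ε) < cos 0 :=
    cos_lt_cos_of_nonneg_of_le_pi le_rfl (by nlinarith [pi_pos]) (by positivity)
  rw [cos_zero] at this
  rw [cosKernel, pow_one]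
  linarith

lemma prod_cosKernel_le_of_le_nintDist {ι : Type*} [Fintype ι] (K : ℕ) {ε : ℝ} (hε : 0 ≤ ε)
    {y : ι → ℝ} {i : ι} (hi : ε ≤ nintDist (y i)) : ∏ j, cosKernel K (y j) ≤ cosKernel K ε := by
  classical
  calc ∏ j, cosKernel K (y j) = cosKernel K (y i) * ∏ j ∈ Finset.univ.erase i, cosKernel K (y j) :=
        (Finset.mul_prod_erase _ _ (Finset.mem_univ i)).symm
    _ ≤ cosKernel K ε * 1 :=
        mul_le_mul (cosKernel_le_of_le_nintDist K hε hi)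
          (Finset.prod_le_one (fun j _ => cosKernel_nonneg K _) fun j _ => cosKernel_le_one K _)
          (Finset.prod_nonneg fun j _ => cosKernel_nonneg K _) (cosKernel_nonneg K ε)
    _ = cosKernel K ε := mul_one _

lemma ofReal_cosKernel (K : ℕ) (θ : ℝ) :
    (cosKernel K θ : ℂ) = ∑ j ∈ Finset.range (2 * K + 1),
      (((2 * K).choose j / 4 ^ K : ℝ) : ℂ) * (𝐞 ((j - K : ℝ) * θ) : ℂ) := by
  have hinv : (𝐞 θ : ℂ) * 𝐞 (-θ) = 1 := by
    rw [← Circle.coe_mul, ← AddChar.map_add_eq_mul, add_neg_cancel, AddChar.map_zero_eq_one,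
      Circle.coe_one]
  have hcos := fourierChar_add_fourierChar_neg θ
  have hbase : (((1 + cos (2 * π * θ)) / 2 : ℝ) : ℂ) = 𝐞 (-θ) * (1 + 𝐞 θ) ^ 2 / 4 := by
    push_cast at hcos ⊢
    linear_combination (-1 / 4 : ℂ) * hcos - (1 / 2 + (𝐞 θ : ℂ) / 4) * hinv
  have hterm : ∀ j : ℕ, (𝐞 ((j - K : ℝ) * θ) : ℂ) = 𝐞 θ ^ j * 𝐞 (-θ) ^ K := fun j => by
    rw [show ((j : ℝ) - K) * θ = j * θ + K * -θ by ring, AddChar.map_add_eq_mul, Circle.coe_mul,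
      fourierChar_natCast_mul, fourierChar_natCast_mul]
  rw [cosKernel, Complex.ofReal_pow, hbase, div_pow, mul_pow, ← pow_mul, add_comm, add_pow,
    Finset.mul_sum, Finset.sum_div]
  refine Finset.sum_congr rfl fun j _ => ?_
  rw [hterm]
  push_cast
  ring

lemma ofReal_prod_cosKernel {ι : Type*} [Fintype ι] [DecidableEq ι] (K : ℕ) (x t : ι → ℝ) (n : ℕ) :
    ((∏ i, cosKernel K (n * x i - t i) : ℝ) : ℂ) =
      ∑ p ∈ Fintype.piFinset fun _ : ι => Finset.range (2 * K + 1),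
        (∏ i, (((2 * K).choose (p i) / 4 ^ K : ℝ) : ℂ) * (𝐞 (-((p i - K : ℝ) * t i)) : ℂ)) *
          (𝐞 (∑ i, (p i - K : ℝ) * x i) : ℂ) ^ n := by
  rw [Complex.ofReal_prod]
  simp_rw [ofReal_cosKernel]
  rw [Finset.prod_univ_sum]
  refine Finset.sum_congr rfl fun p _ => ?_
  rw [← fourierChar_natCast_mul, Finset.mul_sum, fourierChar_sum, ← Finset.prod_mul_distrib]
  refine Finset.prod_congr rfl fun i _ => ?_
  rw [mul_assoc, ← Circle.coe_mul, ← AddChar.map_add_eq_mul]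
  ring_nf

lemma exists_forall_le_sum_prod_cosKernel {ι : Type*} [Fintype ι] {x : ι → ℝ}
    (hx : ∀ c : ι → ℤ, c ≠ 0 → Irrational (∑ i, c i * x i)) (t : ι → ℝ) (K : ℕ) :
    ∃ B : ℝ, ∀ N : ℕ, N * ((K.centralBinom : ℝ) / 4 ^ K) ^ Fintype.card ι - B ≤
      ∑ n ∈ Finset.range N, ∏ i, cosKernel K (n * x i - t i) := by
  classical
  set A := Fintype.piFinset fun _ : ι => Finset.range (2 * K + 1)
  set C : (ι → ℕ) → ℂ := fun p =>
    ∏ i, (((2 * K).choose (p i) / 4 ^ K : ℝ) : ℂ) * (𝐞 (-((p i - K : ℝ) * t i)) : ℂ)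
  set z : (ι → ℕ) → ℂ := fun p => 𝐞 (∑ i, (p i - K : ℝ) * x i)
  obtain ⟨B, hB⟩ := exists_forall_norm_sum_range_sum_pow_sub_le A C z
    fun p _ => (Circle.norm_coe _).le
  have hres : A.filter (fun p => z p = 1) = {fun _ => K} := by
    ext p
    simp only [Finset.mem_filter, Finset.mem_singleton, A, z, Fintype.mem_piFinset,
      Finset.mem_range]
    constructor
    · rintro ⟨-, hp⟩
      by_contra hne
      have hc : (fun i => (p i : ℤ) - K) ≠ 0 := fun h => hne <| funext fun i => by
        have := congrFun h i
        simp only [Pi.zero_apply] at this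
        omega
      obtain ⟨m, hm⟩ := fourierChar_eq_one_iff.1 hp
      exact (hx _ hc).ne_int m (by push_cast; exact hm)
    · rintro rfl
      exact ⟨fun _ => by show K < 2 * K + 1; omega, by simp⟩
  have hconst : ∑ p ∈ A with z p = 1, C p =
      (((K.centralBinom : ℝ) / 4 ^ K) ^ Fintype.card ι : ℝ) := by
    rw [hres, Finset.sum_singleton]
    simp [C, Nat.centralBinom_eq_two_mul_choose, div_pow]
  refine ⟨B, fun N => ?_⟩
  have hN := hB N
  rw [Finset.sum_congr rfl fun n _ => (ofReal_prod_cosKernel K x t n).symm, hconst] at hN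
  simp_rw [← Complex.ofReal_sum, ← Complex.ofReal_natCast,
    ← Complex.ofReal_mul, ← Complex.ofReal_sub, Complex.norm_real, Real.norm_eq_abs] at hN
  linarith [neg_abs_le (∑ n ∈ Finset.range N, ∏ i, cosKernel K (n * x i - t i) -
    N * ((K.centralBinom : ℝ) / 4 ^ K) ^ Fintype.card ι)]

lemma exists_pow_lt_centralBinom_div_pow {ρ : ℝ} (h₀ : 0 ≤ ρ) (h₁ : ρ < 1) (m : ℕ) :
    ∃ K : ℕ, ρ ^ K < ((K.centralBinom : ℝ) / 4 ^ K) ^ m := by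
  have hlim := tendsto_pow_const_mul_const_pow_of_abs_lt_one m (abs_lt.2 ⟨by linarith, h₁⟩)
  obtain ⟨K, hK₄, hK⟩ := ((eventually_ge_atTop 4).and (hlim.eventually_lt_const one_pos)).exists
  have hK : (0 : ℝ) < K := by exact_mod_cast (by omega : 0 < K)
  have hcb : 1 / (K : ℝ) ≤ K.centralBinom / 4 ^ K := by
    rw [div_le_div_iff₀ hK (by positivity), one_mul, mul_comm]
    exact_mod_cast (Nat.four_pow_lt_mul_centralBinom K hK₄).le
  refine ⟨K, ?_⟩
  calc ρ ^ K < 1 / (K : ℝ) ^ m := by rw [lt_div_iff₀ (by positivity)]; linarith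
    _ = (1 / K) ^ m := by rw [one_div_pow]
    _ ≤ _ := pow_le_pow_left₀ (by positivity) hcb m

/-- Kronecker's theorem; the hypothesis says that `1` and the `x i` are linearly independent
over `ℚ`. -/
theorem exists_nat_gt_forall_nintDist_lt {ι : Type*} [Fintype ι] {x : ι → ℝ}
    (hx : ∀ c : ι → ℤ, c ≠ 0 → Irrational (∑ i, c i * x i)) (t : ι → ℝ) {ε : ℝ} (hε : 0 < ε)
    (N₀ : ℕ) : ∃ n > N₀, ∀ i, nintDist (n * x i - t i) < ε := by
  wlog hε₂ : ε ≤ 1 / 2 generalizing ε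
  · obtain ⟨n, hn, h⟩ := this one_half_pos le_rfl
    exact ⟨n, hn, fun i => (h i).trans (by linarith)⟩
  set ρ := cosKernel 1 ε
  obtain ⟨K, hK⟩ := exists_pow_lt_centralBinom_div_pow (cosKernel_nonneg 1 ε)
    (cosKernel_one_lt_one hε hε₂) (Fintype.card ι)
  set c := ((K.centralBinom : ℝ) / 4 ^ K) ^ Fintype.card ι
  obtain ⟨B, hB⟩ := exists_forall_le_sum_prod_cosKernel hx t K
  set F : ℕ → ℝ := fun n => ∏ i, cosKernel K (n * x i - t i)
  have hF₁ : ∀ n, F n ≤ 1 := fun n =>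
    Finset.prod_le_one (fun i _ => cosKernel_nonneg K _) fun i _ => cosKernel_le_one K _
  have hρK : cosKernel K ε = ρ ^ K := by simp [ρ, cosKernel]
  have hc : 0 ≤ c := by positivity
  obtain ⟨N', hN'⟩ := exists_nat_gt ((B + N₀ + 1) / (c - ρ ^ K))
  rw [div_lt_iff₀ (by linarith)] at hN'
  have hsum : ∑ n ∈ Finset.Ico (N₀ + 1) (N₀ + 1 + N'), ρ ^ K <
      ∑ n ∈ Finset.Ico (N₀ + 1) (N₀ + 1 + N'), F n := by
    have hhead : ∑ n ∈ Finset.range (N₀ + 1), F n ≤ N₀ + 1 := by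
      simpa using Finset.sum_le_card_nsmul (Finset.range (N₀ + 1)) F 1 fun n _ => hF₁ n
    have hall := hB (N₀ + 1 + N')
    rw [← Finset.sum_range_add_sum_Ico _ (Nat.le_add_right _ _)] at hall
    rw [Finset.sum_const, Nat.card_Ico, Nat.add_sub_cancel_left, nsmul_eq_mul]
    push_cast at hall
    nlinarith [mul_nonneg (by positivity : (0 : ℝ) ≤ N₀ + 1) hc]
  obtain ⟨n, hn, hρ⟩ := Finset.exists_lt_of_sum_lt hsum
  refine ⟨n, (Finset.mem_Ico.1 hn).1, fun i => ?_⟩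
  by_contra! hi
  exact ((prod_cosKernel_le_of_le_nintDist K hε.le (y := fun i => n * x i - t i) hi).trans_eq
    hρK).not_gt hρ

lemma Perfect.not_countable_inter {P U : Set ℝ} (hP : Perfect P) (hU : IsOpen U)
    (hPU : (P ∩ U).Nonempty) : ¬(P ∩ U).Countable := by
  obtain ⟨w, hwP, hwU⟩ := hPU
  obtain ⟨s, hs, hsU⟩ := Metric.isOpen_iff.1 hU w hwU
  obtain ⟨hD, hDne⟩ := hP.closure_nhds_inter w hwP (mem_ball_self (half_pos hs)) isOpen_ball
  have hDsub : closure (ball w (s / 2) ∩ P) ⊆ P ∩ U := fun v hv => by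
    have hv' := closure_inter_subset_inter_closure _ _ hv
    rw [hP.closed.closure_eq] at hv'
    exact ⟨hv'.2, hsU (closedBall_subset_ball (half_lt_self hs)
      (closure_ball_subset_closedBall hv'.1))⟩
  obtain ⟨f, hfD, -, hf⟩ := hD.exists_nat_bool_injection hDne
  have : Uncountable (ℕ → Bool) := by
    rw [← Cardinal.aleph0_lt_mk_iff]
    simpa using Cardinal.cantor Cardinal.aleph0
  intro hcount
  refine not_countable_univ_iff.2 this (countable_of_injective_of_countable_image hf.injOn ?_)
  exact hcount.mono (image_univ ▸ hfD.trans hDsub)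

/-- Each new point avoids the countably many values that would make some combination rational. -/
lemma exists_forall_mem_irrational_sum {ι : Type*} [Fintype ι] (S : ι → Set ℝ)
    (hS : ∀ j, ¬(S j).Countable) :
    ∃ x : ι → ℝ, (∀ j, x j ∈ S j) ∧ ∀ c : ι → ℤ, c ≠ 0 → Irrational (∑ j, c j * x j) := by
  classical
  suffices h : ∀ s : Finset ι, ∃ x : ι → ℝ, (∀ j, x j ∈ S j) ∧
      ∀ c : ι → ℤ, (∃ j ∈ s, c j ≠ 0) → Irrational (∑ j ∈ s, c j * x j) by
    obtain ⟨x, hxS, hx⟩ := h Finset.univ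
    refine ⟨x, hxS, fun c hc => hx c ?_⟩
    obtain ⟨j, hj⟩ := Function.ne_iff.1 hc
    exact ⟨j, Finset.mem_univ j, hj⟩
  intro s
  induction s using Finset.induction_on with
  | empty =>
    choose x hx using fun j =>
      (nonempty_iff_ne_empty (s := S j)).2 fun h => hS j (h ▸ countable_empty)
    exact ⟨x, hx, fun c ⟨j, hj, _⟩ => absurd hj (Finset.notMem_empty j)⟩
  | insert a s ha ih =>
    obtain ⟨x, hxS, hx⟩ := ih
    obtain ⟨z, hzS, hzB⟩ : ∃ z ∈ S a, z ∉ range fun q : (ι → ℤ) × ℤ × ℚ =>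
        ((q.2.2 : ℝ) - ∑ j ∈ s, q.1 j * x j) / q.2.1 := by
      by_contra! h
      exact hS a ((countable_range _).mono h)
    refine ⟨Function.update x a z, fun j => ?_, fun c hc => ?_⟩
    · by_cases hj : j = a
      · subst hj
        simpa using hzS
      · simpa [hj] using hxS j
    have hsum : ∑ j ∈ insert a s, c j * Function.update x a z j
        = c a * z + ∑ j ∈ s, c j * x j := by
      rw [Finset.sum_insert ha, Function.update_self]
      congr 1
      refine Finset.sum_congr rfl fun j hj => ?_
      rw [Function.update_of_ne (ne_of_mem_of_not_mem hj ha)]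
    rw [hsum]
    by_cases hca : c a = 0
    · rw [hca, Int.cast_zero, zero_mul, zero_add]
      obtain ⟨j, hj, hcj⟩ := hc
      exact hx c ⟨j, (Finset.mem_insert.1 hj).resolve_left (by rintro rfl; exact hcj hca), hcj⟩
    · rintro ⟨q, hq⟩
      have hca' : (c a : ℝ) ≠ 0 := by exact_mod_cast hca
      exact hzB ⟨(c, c a, q), by field_simp; linarith⟩

lemma exists_closedBall_subset_mul_le {x c R : ℝ} (hx : x ∈ ball c R) (n : ℕ) {δ : ℝ}
    (hδ : 0 < δ) : ∃ r > 0, closedBall x r ⊆ closedBall c R ∧ n * r ≤ δ := by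
  have hx' : dist x c < R := hx
  set r := min (R - dist x c) (δ / (n + 1))
  have hr₁ : r ≤ R - dist x c := min_le_left _ _
  have hr₂ : r ≤ δ / (n + 1) := min_le_right _ _
  refine ⟨r, lt_min (by linarith) (by positivity), closedBall_subset_closedBall' (by linarith), ?_⟩
  calc n * r ≤ n * (δ / (n + 1)) := by gcongr
    _ ≤ δ := by
      rw [mul_div_assoc', div_le_iff₀ (by positivity)]
      nlinarith

/-- A pair `I = (c, r)` stands for the ball `ball c r`. -/
def IsRefinement (P : Set ℝ) (n : ℕ) (ε : ℝ) (L L' : Finset (ℝ × ℝ)) : Prop :=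
  ∀ I ∈ L, (P ∩ ball I.1 I.2).Nonempty → ∀ β : ℝ, ∃ I' ∈ L', (P ∩ ball I'.1 I'.2).Nonempty ∧
    closedBall I'.1 I'.2 ⊆ closedBall I.1 I.2 ∧
    ∀ q ∈ closedBall I'.1 I'.2, nintDist (β - n * q) ≤ ε

lemma Perfect.exists_isRefinement {P : Set ℝ} (hP : Perfect P) (L : Finset (ℝ × ℝ)) {ε : ℝ}
    (hε : 0 < ε) (N₀ : ℕ) : ∃ n > N₀, ∃ L', IsRefinement P n ε L L' := by
  classical
  obtain ⟨M, hM⟩ := exists_nat_gt (2 / ε)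
  have hM₀ : 0 < M := by exact_mod_cast (by positivity : (0 : ℝ) < 2 / ε).trans hM
  have hMε : 1 / (M : ℝ) ≤ ε / 2 := by
    rw [div_lt_iff₀ hε] at hM
    rw [div_le_iff₀ (by positivity)]
    linarith
  let ι := {I // I ∈ L.filter fun I => (P ∩ ball I.1 I.2).Nonempty} × Fin M
  obtain ⟨x, hxP, hx⟩ := exists_forall_mem_irrational_sum (fun j : ι => P ∩ ball j.1.1.1 j.1.1.2)
    fun j => hP.not_countable_inter isOpen_ball (Finset.mem_filter.1 j.1.2).2
  obtain ⟨n, hn, hnx⟩ :=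
    exists_nat_gt_forall_nintDist_lt hx (fun j => (j.2 : ℝ) / M) (by positivity : 0 < ε / 4) N₀
  choose r hr₀ hrI hrn using fun j : ι =>
    exists_closedBall_subset_mul_le (hxP j).2 n (by positivity : 0 < ε / 4)
  refine ⟨n, hn, Finset.univ.image fun j => (x j, r j), fun I hI hIP β => ?_⟩
  obtain ⟨i, hi⟩ := exists_nintDist_sub_div_le β hM₀
  set j : ι := (⟨I, Finset.mem_filter.2 ⟨hI, hIP⟩⟩, i)
  refine ⟨(x j, r j), Finset.mem_image_of_mem _ (Finset.mem_univ j),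
    ⟨x j, (hxP j).1, mem_ball_self (hr₀ j)⟩, hrI j, fun q hq => ?_⟩
  have hq : nintDist (n * x j - n * q) ≤ ε / 4 :=
    calc nintDist (n * x j - n * q) ≤ |n * x j - n * q| := nintDist_le_abs _
      _ = n * dist q (x j) := by
        rw [← mul_sub, abs_mul, Nat.abs_cast, Real.dist_eq, abs_sub_comm]
      _ ≤ n * r j := by gcongr; exact hq
      _ ≤ ε / 4 := hrn j
  calc nintDist (β - n * q)
      ≤ nintDist (β - i / M) + nintDist (i / M - n * x j) + nintDist (n * x j - n * q) := by
        linarith [nintDist_sub_le β (i / M) (n * q), nintDist_sub_le (i / M) (n * x j) (n * q)]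
    _ ≤ ε / 2 + ε / 4 + ε / 4 := by
        rw [nintDist_sub_comm (i / M : ℝ)]
        gcongr
        · exact hi.trans hMε
        · exact (hnx j).le
    _ = ε := by ring

lemma Perfect.exists_strictMono_isRefinement {P : Set ℝ} (hP : Perfect P) :
    ∃ (n : ℕ → ℕ) (L : ℕ → Finset (ℝ × ℝ)), StrictMono n ∧
      (∀ z ∈ P, ∀ δ > 0, ∃ k, ∃ I ∈ L k,
        (P ∩ ball I.1 I.2).Nonempty ∧ closedBall I.1 I.2 ⊆ ball z δ) ∧
      ∀ k, IsRefinement P (n (k + 1)) ((1 / 2) ^ (k + 1)) (L k) (L (k + 1)) := by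
  obtain ⟨g, hg⟩ := exists_surjective_nat (ℚ × ℚ)
  choose m hm L' hL' using fun (k N₀ : ℕ) (L : Finset (ℝ × ℝ)) =>
    hP.exists_isRefinement L (by positivity : (0 : ℝ) < (1 / 2) ^ (k + 1)) N₀
  -- stage `k + 1` also receives the `k`-th ball with rational centre and radius
  let st : ℕ → ℕ × Finset (ℝ × ℝ) := fun k => Nat.rec (0, ∅)
    (fun k s => (m k s.1 s.2, insert (((g k).1 : ℝ), ((g k).2 : ℝ)) (L' k s.1 s.2))) k
  refine ⟨fun k => (st k).1, fun k => (st k).2, strictMono_nat_of_lt_succ fun k => hm k _ _,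
    fun z hz δ hδ => ?_, fun k I hI hIP β => ?_⟩
  · obtain ⟨c, hc₁, hc₂⟩ := exists_rat_btwn (by linarith : z - δ / 3 < z)
    obtain ⟨r, hr₁, hr₂⟩ := exists_rat_btwn (by linarith : δ / 3 < 2 * δ / 3)
    obtain ⟨k, hk⟩ := hg (c, r)
    have hcz : dist (c : ℝ) z < δ / 3 := by rw [Real.dist_eq, abs_lt]; constructor <;> linarith
    refine ⟨k + 1, ((c : ℝ), (r : ℝ)), ?_, ⟨z, hz, by rw [mem_ball, dist_comm]; linarith⟩,
      closedBall_subset_ball' (by linarith)⟩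
    show _ ∈ insert _ _
    rw [hk]
    exact Finset.mem_insert_self _ _
  · obtain ⟨I', hI', h⟩ := hL' k _ _ I hI hIP β
    exact ⟨I', Finset.mem_insert_of_mem hI', h⟩

lemma exists_mem_closedBall_forall_nintDist_le {P : Set ℝ} (hP : IsClosed P) {n : ℕ → ℕ}
    {L : ℕ → Finset (ℝ × ℝ)}
    (hL : ∀ k, IsRefinement P (n (k + 1)) ((1 / 2) ^ (k + 1)) (L k) (L (k + 1)))
    (y : ℝ) {k₀ : ℕ} {I : ℝ × ℝ} (hI : I ∈ L k₀) (hIP : (P ∩ ball I.1 I.2).Nonempty) :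
    ∃ w ∈ P ∩ closedBall I.1 I.2, ∀ k > k₀, nintDist (n k * (y - w)) ≤ (1 / 2) ^ k := by
  have hstep : ∀ k (J : ℝ × ℝ), ∃ J' : ℝ × ℝ, J ∈ L k → (P ∩ ball J.1 J.2).Nonempty →
      J' ∈ L (k + 1) ∧ (P ∩ ball J'.1 J'.2).Nonempty ∧ closedBall J'.1 J'.2 ⊆ closedBall J.1 J.2 ∧
        ∀ q ∈ closedBall J'.1 J'.2,
          nintDist (n (k + 1) * y - n (k + 1) * q) ≤ (1 / 2) ^ (k + 1) := by
    intro k J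
    by_cases hJ : J ∈ L k ∧ (P ∩ ball J.1 J.2).Nonempty
    · obtain ⟨J', hJ', h⟩ := hL k J hJ.1 hJ.2 (n (k + 1) * y)
      exact ⟨J', fun _ _ => ⟨hJ', h⟩⟩
    · exact ⟨J, fun h₁ h₂ => absurd ⟨h₁, h₂⟩ hJ⟩
  choose next hnext using hstep
  let T : ℕ → ℝ × ℝ := fun m => Nat.rec I (fun m J => next (k₀ + m) J) m
  have hT : ∀ m, T m ∈ L (k₀ + m) ∧ (P ∩ ball (T m).1 (T m).2).Nonempty := by
    intro m
    induction m with
    | zero => exact ⟨hI, hIP⟩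
    | succ m ih => exact ⟨(hnext _ _ ih.1 ih.2).1, (hnext _ _ ih.1 ih.2).2.1⟩
  obtain ⟨w, hw⟩ := IsCompact.nonempty_iInter_of_sequence_nonempty_isCompact_isClosed
    (fun m => P ∩ closedBall (T m).1 (T m).2)
    (fun m => inter_subset_inter_right _ (hnext _ _ (hT m).1 (hT m).2).2.2.1)
    (fun m => (hT m).2.mono (inter_subset_inter_right _ ball_subset_closedBall))
    ((isCompact_closedBall _ _).inter_left hP) (fun m => hP.inter isClosed_closedBall)
  rw [mem_iInter] at hw
  refine ⟨w, hw 0, fun k hk => ?_⟩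
  obtain ⟨m, rfl⟩ : ∃ m, k = k₀ + m + 1 := ⟨k - k₀ - 1, by omega⟩
  rw [mul_sub]
  exact (hnext _ _ (hT m).1 (hT m).2).2.2.2 w (hw (m + 1)).2

theorem stmt3_general (P : Set ℝ) (hP : Perfect P) :
    ∃ n : ℕ → ℕ, StrictMono n ∧
      ∀ y : ℝ, P ⊆ closure
        (P ∩ ((fun d => y - d) ''
          {x : ℝ | ∀ᶠ k in atTop, nintDist (n k * x) ≤ (1/2) ^ k})) := by
  obtain ⟨n, L, hn, hdense, hL⟩ := hP.exists_strictMono_isRefinement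
  refine ⟨n, hn, fun y z hz => Metric.mem_closure_iff.2 fun δ hδ => ?_⟩
  obtain ⟨k, I, hI, hIP, hIz⟩ := hdense z hz δ hδ
  obtain ⟨w, ⟨hwP, hwI⟩, hw⟩ := exists_mem_closedBall_forall_nintDist_le hP.closed hL y hI hIP
  refine ⟨w, ⟨hwP, y - w, eventually_atTop.2 ⟨k + 1, fun j hj => hw j hj⟩, sub_sub_cancel y w⟩, ?_⟩
  simpa [dist_comm] using hIz hwI

theorem stmt3 (P : Set ℝ) (hP : Perfect P) (hne : P.Nonempty) :
    ∃ n : ℕ → ℕ, StrictMono n ∧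
      ∀ y : ℝ, P ⊆ closure
        (P ∩ ((fun d => y - d) ''
          {x : ℝ | ∀ᶠ k in atTop, nintDist (n k * x) ≤ (1/2) ^ k})) :=
  stmt3_general P hP
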